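/- Let F be a nonempty compact convex set of density matrices containing a full-rank state, and let Rmax(ρ) = sup{⟨ρ,W⟩ : W ⪰ 0, ⟨W,σ⟩ ≤ 1 ∀σ∈F}. Suppose M = Rmax(ρ̃) is the maximum value of Rmax over all density matrices, achieved at the state ρ̃ with optimal witness W (W ⪰ 0, W ∈ F°, ⟨W,ρ̃⟩ = M). Then W ⪯ M·𝟙, and every unit vector |ψ⟩ in the support of ρ̃ is an eigenvector of W with eigenvalue M; consequently W = M·Π_{ρ̃} + G for some G ⪰ 0 whose support lies in the kernel of ρ̃, where Π_{ρ̃} is the orthogonal projection onto the support of ρ̃. -/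

import Mathlib

open Matrix
open scoped ComplexOrder

/-- Hilbert–Schmidt inner product (real part of Tr(A B)) on matrices. -/
noncomputable def ip {n : Type*} [Fintype n] (A B : Matrix n n ℂ) : ℝ := ((A * B).trace).re

/-- A density matrix: positive semidefinite with trace one. -/
def IsDensity {n : Type*} [Fintype n] (ρ : Matrix n n ℂ) : Prop := ρ.PosSemidef ∧ ρ.trace = 1

/-- A pure state: a rank-one (trace-one) projection. -/
def IsPure {n : Type*} [Fintype n] (P : Matrix n n ℂ) : Prop := IsDensity P ∧ P * P = P

/-- Generalized robustness, dual form. -/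
noncomputable def Rmax {n : Type*} [Fintype n] (F : Set (Matrix n n ℂ)) (ρ : Matrix n n ℂ) : ℝ :=
  sSup {x : ℝ | ∃ W : Matrix n n ℂ, W.PosSemidef ∧ (∀ σ ∈ F, ip W σ ≤ 1) ∧ x = ip ρ W}

/-- Maximal overlap with the free set. -/
noncomputable def RminInv {n : Type*} [Fintype n] (F : Set (Matrix n n ℂ)) (φ : Matrix n n ℂ) : ℝ :=
  sSup {x : ℝ | ∃ σ ∈ F, x = ip φ σ}

/-- Rmin: reciprocal of maximal overlap with the free set. -/
noncomputable def Rmin {n : Type*} [Fintype n] (F : Set (Matrix n n ℂ)) (φ : Matrix n n ℂ) : ℝ :=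
  1 / RminInv F φ

/-!
Since `τ ∈ F` is positive definite, every state satisfies `σ ⪯ c τ` for some `c`, so the witnesses
feasible for `Rmax F σ` have bounded value and `⟨σ, W⟩ ≤ Rmax F σ ≤ M` for every state `σ`.
Evaluating on the projections onto the eigenvectors of `W` gives `W ⪯ M 𝟙`. Then `M 𝟙 - W` and `ρ`
are positive semidefinite with `⟨M 𝟙 - W, ρ⟩ = M - M = 0`, which forces `(M 𝟙 - W) ρ = 0`: `W` acts
as `M` on the support of `ρ`. Hence `W P = M P`, and `W - M P = (𝟙 - P) W (𝟙 - P)` is positive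
semidefinite and annihilated by `ρ`.
-/

open scoped MatrixOrder

namespace Matrix

section CommSemiring

variable {n R : Type*} [Fintype n] [CommSemiring R]

theorem mul_eq_self_of_range_le {P A : Matrix n n R} (hPP : P * P = P)
    (hA : LinearMap.range A.mulVecLin ≤ LinearMap.range P.mulVecLin) : P * A = A := by
  refine ext_iff_mulVec.2 fun v ↦ ?_
  obtain ⟨u, hu⟩ := hA ⟨v, rfl⟩
  simp only [mulVecLin_apply] at hu
  rw [← mulVec_mulVec, ← hu, mulVec_mulVec, hPP]

theorem range_mulVecLin_le_ker_iff {A B : Matrix n n R} :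
    LinearMap.range A.mulVecLin ≤ LinearMap.ker B.mulVecLin ↔ B * A = 0 := by
  rw [LinearMap.range_le_ker_iff, ← mulVecLin_mul]
  refine ⟨fun h ↦ ext_iff_mulVec.2 fun v ↦ ?_, fun h ↦ by rw [h, mulVecLin_zero]⟩
  simpa using LinearMap.congr_fun h v

end CommSemiring

variable {n 𝕜 : Type*} [Fintype n] [RCLike 𝕜]

theorem IsHermitian.mul_eq_smul_swap {A B : Matrix n n 𝕜} (hA : A.IsHermitian)
    (hB : B.IsHermitian) {c : ℝ} (h : A * B = c • B) : B * A = c • B := by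
  simpa [conjTranspose_mul, hA.eq, hB.eq] using congr($(h)ᴴ)

variable [DecidableEq n]

theorem PosSemidef.trace_mul_nonneg {A B : Matrix n n 𝕜} (hA : A.PosSemidef)
    (hB : B.PosSemidef) : 0 ≤ (A * B).trace := by
  obtain ⟨C, rfl⟩ := CStarAlgebra.nonneg_iff_eq_star_mul_self.mp hA.nonneg
  rw [Matrix.mul_assoc, trace_mul_comm, star_eq_conjTranspose]
  exact (hB.mul_mul_conjTranspose_same C).trace_nonneg

theorem PosSemidef.mul_eq_zero_of_trace_mul_eq_zero {A B : Matrix n n 𝕜} (hA : A.PosSemidef)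
    (hB : B.PosSemidef) (h : (A * B).trace = 0) : A * B = 0 := by
  obtain ⟨C, rfl⟩ := CStarAlgebra.nonneg_iff_eq_star_mul_self.mp hA.nonneg
  obtain ⟨D, rfl⟩ := CStarAlgebra.nonneg_iff_eq_star_mul_self.mp hB.nonneg
  simp only [star_eq_conjTranspose] at h ⊢
  have hCD : C * Dᴴ = 0 := by
    rw [← trace_conjTranspose_mul_self_eq_zero_iff, ← h, conjTranspose_mul,
      conjTranspose_conjTranspose, Matrix.mul_assoc, trace_mul_comm]
    simp only [Matrix.mul_assoc]
  rw [Matrix.mul_assoc, ← Matrix.mul_assoc C, hCD, Matrix.zero_mul, Matrix.mul_zero]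

theorem PosDef.exists_pos_smul_one_le {A : Matrix n n 𝕜} (hA : A.PosDef) :
    ∃ r : ℝ, 0 < r ∧ r • 1 ≤ A := by
  rcases isEmpty_or_nonempty n with hn | hn
  · exact ⟨1, one_pos, le_of_eq (Subsingleton.elim _ _)⟩
  have hpos := isStrictlyPositive_iff_posDef.mpr hA
  simp_rw [← Algebra.algebraMap_eq_smul_one]
  exact (CFC.exists_pos_algebraMap_le_iff hpos.isSelfAdjoint).2 fun _ hx ↦ hpos.spectrum_pos hx

theorem PosSemidef.sub_smul_of_mul_eq_smul {W P : Matrix n n 𝕜} (hW : W.PosSemidef)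
    (hP : P.IsHermitian) (hPP : P * P = P) {c : ℝ} (hWP : W * P = c • P) :
    (W - c • P).PosSemidef := by
  have hPW : P * W = c • P := hW.isHermitian.mul_eq_smul_swap hP hWP
  have hconj : W - c • P = (1 - P) * W * (1 - P)ᴴ := by
    rw [conjTranspose_sub, conjTranspose_one, hP.eq, Matrix.sub_mul, Matrix.one_mul, hPW,
      Matrix.mul_sub, Matrix.mul_one, Matrix.sub_mul, hWP, smul_mul_assoc, hPP]
    abel
  exact hconj ▸ hW.mul_mul_conjTranspose_same (1 - P)

end Matrix

open Matrix

variable {n : Type*} [Fintype n]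

theorem ip_comm (A B : Matrix n n ℂ) : ip A B = ip B A := by
  rw [ip, ip, trace_mul_comm]

theorem ip_vecMulVec_star (v : n → ℂ) (W : Matrix n n ℂ) :
    ip (vecMulVec v (star v)) W = (star v ⬝ᵥ W *ᵥ v).re := by
  rw [ip, trace_mul_comm, mul_vecMulVec, trace_vecMulVec, dotProduct_comm]

theorem isDensity_vecMulVec_star {v : EuclideanSpace ℂ n} (hv : ‖v‖ = 1) :
    IsDensity (vecMulVec ⇑v (star ⇑v)) := by
  refine ⟨posSemidef_vecMulVec_self_star _, ?_⟩
  rw [trace_vecMulVec, ← EuclideanSpace.inner_eq_star_dotProduct, inner_self_eq_norm_sq_to_K, hv]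
  simp

variable [DecidableEq n]

theorem ip_nonneg {A B : Matrix n n ℂ} (hA : A.PosSemidef) (hB : B.PosSemidef) : 0 ≤ ip A B :=
  (Complex.nonneg_iff.mp (hA.trace_mul_nonneg hB)).1

theorem mul_eq_zero_of_ip_eq_zero {A B : Matrix n n ℂ} (hA : A.PosSemidef) (hB : B.PosSemidef)
    (h : ip A B = 0) : A * B = 0 :=
  hA.mul_eq_zero_of_trace_mul_eq_zero hB <|
    Complex.ext h (Complex.nonneg_iff.mp (hA.trace_mul_nonneg hB)).2.symm

theorem ip_le_ip_of_le {A B W : Matrix n n ℂ} (hAB : A ≤ B) (hW : W.PosSemidef) :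
    ip A W ≤ ip B W := by
  have h := ip_nonneg hAB hW
  rw [ip, Matrix.sub_mul, trace_sub, Complex.sub_re] at h
  exact sub_nonneg.mp h

theorem IsDensity.le_one {σ : Matrix n n ℂ} (hσ : IsDensity σ) : σ ≤ 1 := by
  obtain ⟨hpsd, htr⟩ := hσ
  have hsum : ∑ i, hpsd.isHermitian.eigenvalues i = 1 := by
    simpa [htr] using congrArg Complex.re hpsd.isHermitian.trace_eq_sum_eigenvalues.symm
  rw [← map_one (algebraMap ℝ (Matrix n n ℂ)),
    le_algebraMap_iff_spectrum_le hpsd.isHermitian.isSelfAdjoint,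
    hpsd.isHermitian.spectrum_real_eq_range_eigenvalues]
  rintro _ ⟨i, rfl⟩
  exact hsum ▸ Finset.single_le_sum (fun j _ ↦ hpsd.eigenvalues_nonneg j) (Finset.mem_univ i)

theorem Matrix.PosDef.exists_forall_isDensity_le_smul {τ : Matrix n n ℂ} (hτ : τ.PosDef) :
    ∃ c : ℝ, 0 ≤ c ∧ ∀ σ, IsDensity σ → σ ≤ c • τ := by
  obtain ⟨r, hr, hrτ⟩ := hτ.exists_pos_smul_one_le
  refine ⟨r⁻¹, inv_nonneg.mpr hr.le, fun σ hσ ↦ hσ.le_one.trans ?_⟩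
  have h := smul_le_smul_of_nonneg_left hrτ (inv_nonneg.mpr hr.le)
  rwa [smul_smul, inv_mul_cancel₀ hr.ne', one_smul] at h

-- The bound coming from `τ` matters: `sSup` of an unbounded set of reals is the junk value `0`.
theorem ip_le_Rmax {F : Set (Matrix n n ℂ)} {τ : Matrix n n ℂ} (hτF : τ ∈ F) (hτ : τ.PosDef)
    {σ W : Matrix n n ℂ} (hσ : IsDensity σ) (hW : W.PosSemidef) (hWF : ∀ σ ∈ F, ip W σ ≤ 1) :
    ip σ W ≤ Rmax F σ := by
  obtain ⟨c, hc, hle⟩ := hτ.exists_forall_isDensity_le_smul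
  refine le_csSup ⟨c, ?_⟩ ⟨W, hW, hWF, rfl⟩
  rintro _ ⟨W', hW', hW'F, rfl⟩
  calc ip σ W' ≤ ip (c • τ) W' := ip_le_ip_of_le (hle σ hσ) hW'
    _ = c * ip W' τ := by
      rw [ip, smul_mul_assoc, trace_smul, Complex.smul_re, ip_comm, ip, smul_eq_mul]
    _ ≤ c := mul_le_of_le_one_right hc (hW'F τ hτF)

theorem le_smul_one_of_forall_ip_le {W : Matrix n n ℂ} (hW : W.IsHermitian) {M : ℝ}
    (h : ∀ σ, IsDensity σ → ip σ W ≤ M) : W ≤ M • 1 := by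
  rw [← Algebra.algebraMap_eq_smul_one, le_algebraMap_iff_spectrum_le hW.isSelfAdjoint,
    hW.spectrum_real_eq_range_eigenvalues]
  rintro _ ⟨i, rfl⟩
  have hi := h _ (isDensity_vecMulVec_star (hW.eigenvectorBasis.orthonormal.1 i))
  rw [ip_vecMulVec_star] at hi
  exact (hW.eigenvalues_eq i).trans_le hi

theorem mul_eq_smul_of_le_smul_one {W ρ : Matrix n n ℂ} {M : ℝ} (hWM : W ≤ M • 1)
    (hρ : IsDensity ρ) (hval : ip ρ W = M) : W * ρ = M • ρ := by
  have hip : ip (M • 1 - W) ρ = 0 := by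
    rw [ip, Matrix.sub_mul, smul_one_mul, trace_sub, trace_smul, hρ.2, Complex.sub_re,
      ← ip, ip_comm, hval]
    simp
  rw [← sub_eq_zero, ← neg_sub, neg_eq_zero, ← smul_one_mul, ← Matrix.sub_mul]
  exact mul_eq_zero_of_ip_eq_zero hWM hρ.1 hip

theorem stmt4_general {d : ℕ} (F : Set (Matrix (Fin d) (Fin d) ℂ))
    (τ : Matrix (Fin d) (Fin d) ℂ) (hτF : τ ∈ F) (hτ : τ.PosDef)
    (ρ W : Matrix (Fin d) (Fin d) ℂ) (hρ : IsDensity ρ) (M : ℝ)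
    (hWpsd : W.PosSemidef) (hWfeas : ∀ σ ∈ F, ip W σ ≤ 1) (hWval : ip ρ W = M)
    (hMmax : ∀ σ, IsDensity σ → Rmax F σ ≤ M)
    (P : Matrix (Fin d) (Fin d) ℂ) (hPh : P.IsHermitian) (hPproj : P * P = P)
    (hPrange : LinearMap.range P.mulVecLin = LinearMap.range ρ.mulVecLin) :
    (M • (1 : Matrix (Fin d) (Fin d) ℂ) - W).PosSemidef ∧
      (∀ ψ : Fin d → ℂ, ψ ∈ LinearMap.range ρ.mulVecLin → W.mulVec ψ = M • ψ) ∧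
      ∃ G : Matrix (Fin d) (Fin d) ℂ, G.PosSemidef ∧
        LinearMap.range G.mulVecLin ≤ LinearMap.ker ρ.mulVecLin ∧ W = M • P + G := by
  have hWM : W ≤ M • 1 := le_smul_one_of_forall_ip_le hWpsd.isHermitian fun σ hσ ↦
    (ip_le_Rmax hτF hτ hσ hWpsd hWfeas).trans (hMmax σ hσ)
  have hWρ : W * ρ = M • ρ := mul_eq_smul_of_le_smul_one hWM hρ hWval
  have heigen : ∀ ψ ∈ LinearMap.range ρ.mulVecLin, W *ᵥ ψ = M • ψ := by
    rintro _ ⟨y, rfl⟩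
    rw [mulVecLin_apply, mulVec_mulVec, hWρ, smul_mulVec]
  have hWP : W * P = M • P := ext_iff_mulVec.2 fun y ↦ by
    rw [← mulVec_mulVec, smul_mulVec, heigen _ (hPrange ▸ ⟨y, rfl⟩)]
  have hρP : ρ * P = ρ := by
    simpa [hPh.eq, hρ.1.isHermitian.eq] using
      congr($(mul_eq_self_of_range_le hPproj hPrange.ge)ᴴ)
  have hρW : ρ * W = M • ρ := hWpsd.isHermitian.mul_eq_smul_swap hρ.1.isHermitian hWρ
  refine ⟨hWM, heigen, W - M • P, hWpsd.sub_smul_of_mul_eq_smul hPh hPproj hWP, ?_, by abel⟩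
  rw [range_mulVecLin_le_ker_iff, Matrix.mul_sub, hρW, mul_smul_comm, hρP, sub_self]

/-- Structure of an optimal robustness witness at a state maximizing Rmax:
W ⪯ M𝟙, every vector in the support of ρ is an eigenvector of W with eigenvalue M,
and W = M Π_ρ + G with supp(G) ⊆ ker(ρ). -/
theorem stmt4 {d : ℕ} (F : Set (Matrix (Fin d) (Fin d) ℂ))
    (hne : F.Nonempty) (hcomp : IsCompact F) (hconv : Convex ℝ F)
    (hdens : ∀ σ ∈ F, IsDensity σ)
    (τ : Matrix (Fin d) (Fin d) ℂ) (hτF : τ ∈ F) (hτ : τ.PosDef)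
    (ρ W : Matrix (Fin d) (Fin d) ℂ) (hρ : IsDensity ρ) (M : ℝ)
    (hWpsd : W.PosSemidef) (hWfeas : ∀ σ ∈ F, ip W σ ≤ 1) (hWval : ip ρ W = M)
    (hRmaxρ : Rmax F ρ = M)
    (hMmax : ∀ σ, IsDensity σ → Rmax F σ ≤ M)
    (P : Matrix (Fin d) (Fin d) ℂ) (hPh : P.IsHermitian) (hPproj : P * P = P)
    (hPrange : LinearMap.range P.mulVecLin = LinearMap.range ρ.mulVecLin) :
    (M • (1 : Matrix (Fin d) (Fin d) ℂ) - W).PosSemidef ∧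
      (∀ ψ : Fin d → ℂ, ψ ∈ LinearMap.range ρ.mulVecLin → W.mulVec ψ = M • ψ) ∧
      ∃ G : Matrix (Fin d) (Fin d) ℂ, G.PosSemidef ∧
        LinearMap.range G.mulVecLin ≤ LinearMap.ker ρ.mulVecLin ∧ W = M • P + G :=
  stmt4_general F τ hτF hτ ρ W hρ M hWpsd hWfeas hWval hMmax P hPh hPproj hPrange
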